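/- The convex hull in ℂ×ℝ ≅ ℝ³ of the four points (1−(√2/2)i, √2), (1−(√2/2)i, 1), (1−(1/2)i, √2) and (√2/2−(1/2)i, √2) is contained in the open Cygan ball B((1,0), 1) = {(ζ,t) ∈ ℂ×ℝ : | |ζ−1|² + i t + 2i·Im ζ | < 1}. -/

import Mathlib

/-!
The Cygan ball is convex: the square of its defining norm is
`|ζ - ζ₀|⁴ + (t - t₀ + 2 Im(ζ ζ̄₀))²`, the fourth power of a norm plus the square of a
real-affine function of `(ζ, t)`. So it contains the convex hull of any points it contains, and
at each of the four vertices this squared norm is an explicit number in `√2` below `1`.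
-/

noncomputable section

open Complex

open ComplexConjugate

/-- The open Cygan ball of squared radius `s` centred at `(ζ₀, t₀)` in the Heisenberg
group `ℂ × ℝ`:  `{(ζ,t) : | |ζ−ζ₀|² + i(t−t₀) + 2i·Im(ζ·conj ζ₀) | < s}`. -/
def cyganBall (ζ₀ : ℂ) (t₀ : ℝ) (s : ℝ) : Set (ℂ × ℝ) :=
  {p | ‖(((‖p.1 - ζ₀‖ ^ 2 : ℝ) : ℂ)
        + Complex.I * ((p.2 - t₀ : ℝ) : ℂ)
        + 2 * Complex.I * (((p.1 * (starRingEnd ℂ) ζ₀).im : ℝ) : ℂ))‖ < s}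

def cyganHeight (ζ₀ : ℂ) : ℂ × ℝ →ₗ[ℝ] ℝ where
  toFun p := p.2 + 2 * (p.1 * conj ζ₀).im
  map_add' p q := by simp only [Prod.fst_add, Prod.snd_add, add_mul, add_im]; ring
  map_smul' c p := by
    simp only [Prod.smul_fst, Prod.smul_snd, smul_eq_mul, real_smul, mul_assoc, im_ofReal_mul,
      RingHom.id_apply]
    ring

def cyganGaugeSq (ζ₀ : ℂ) (t₀ : ℝ) (p : ℂ × ℝ) : ℝ :=
  normSq (p.1 - ζ₀) ^ 2 + (cyganHeight ζ₀ p - t₀) ^ 2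

lemma convexOn_cyganGaugeSq (ζ₀ : ℂ) (t₀ : ℝ) : ConvexOn ℝ Set.univ (cyganGaugeSq ζ₀ t₀) := by
  have hnorm : ConvexOn ℝ Set.univ fun p : ℂ × ℝ => ‖p.1 - ζ₀‖ := by
    simpa [Function.comp_def, dist_eq_norm] using
      (convexOn_univ_dist ζ₀).comp_linearMap (LinearMap.fst ℝ ℂ ℝ)
  have hheight : ConvexOn ℝ Set.univ fun p : ℂ × ℝ => (cyganHeight ζ₀ p - t₀) ^ 2 := by
    simpa [Function.comp_def, neg_add_eq_sub] using
      (((Even.convexOn_pow even_two).translate_right (-t₀)).comp_linearMap (cyganHeight ζ₀))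
  have hnormSq : ConvexOn ℝ Set.univ fun p : ℂ × ℝ => normSq (p.1 - ζ₀) ^ 2 := by
    refine (hnorm.pow (fun _ _ => norm_nonneg _) 4).congr fun p _ => ?_
    rw [Pi.pow_apply, ← Complex.sq_norm, ← pow_mul]
  exact hnormSq.add hheight

lemma sq_norm_cyganBall_expr (ζ₀ : ℂ) (t₀ : ℝ) (p : ℂ × ℝ) :
    ‖(((‖p.1 - ζ₀‖ ^ 2 : ℝ) : ℂ) + I * ((p.2 - t₀ : ℝ) : ℂ)
        + 2 * I * (((p.1 * (starRingEnd ℂ) ζ₀).im : ℝ) : ℂ))‖ ^ 2 = cyganGaugeSq ζ₀ t₀ p := by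
  rw [Complex.sq_norm, normSq_apply, cyganGaugeSq, ← Complex.sq_norm]
  simp only [cyganHeight, LinearMap.coe_mk, AddHom.coe_mk, add_re, add_im, mul_re, mul_im,
    ofReal_re, ofReal_im, I_re, I_im, re_ofNat, im_ofNat]
  ring

lemma mem_cyganBall_iff {ζ₀ : ℂ} {t₀ s : ℝ} (hs : 0 ≤ s) (p : ℂ × ℝ) :
    p ∈ cyganBall ζ₀ t₀ s ↔ cyganGaugeSq ζ₀ t₀ p < s ^ 2 := by
  rw [cyganBall, Set.mem_ofPred_eq, ← sq_norm_cyganBall_expr,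
    pow_lt_pow_iff_left₀ (norm_nonneg _) hs two_ne_zero]

lemma convex_cyganBall (ζ₀ : ℂ) (t₀ s : ℝ) : Convex ℝ (cyganBall ζ₀ t₀ s) := by
  rcases le_or_gt 0 s with hs | hs
  · rw [show cyganBall ζ₀ t₀ s = {p | cyganGaugeSq ζ₀ t₀ p < s ^ 2} from
      Set.ext (mem_cyganBall_iff hs)]
    simpa using (convexOn_cyganGaugeSq ζ₀ t₀).convex_lt (s ^ 2)
  · convert convex_empty (𝕜 := ℝ)
    exact Set.eq_empty_of_forall_notMem fun p hp => (norm_nonneg _).not_gt (hp.trans hs)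

lemma cyganGaugeSq_one_zero (p : ℂ × ℝ) :
    cyganGaugeSq 1 0 p = ((p.1.re - 1) ^ 2 + p.1.im ^ 2) ^ 2 + (p.2 + 2 * p.1.im) ^ 2 := by
  simp only [cyganGaugeSq, normSq_apply, sub_re, one_re, sub_im, one_im, sub_zero, cyganHeight,
    map_one, mul_one, LinearMap.coe_mk, AddHom.coe_mk]
  ring

/-- The tetrahedron `𝕋(v₁⁺)` with apex the vertex `v₁⁺ = (1−(√2/2)i, √2)` of the prism
`Σ₂` and the three points `(1−(√2/2)i, 1)`, `(1−(1/2)i, √2)`, `(√2/2−(1/2)i, √2)` on the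
edges emanating from `v₁⁺` is contained in the open Cygan ball `B((1,0),1)`, the interior
of the spinal sphere `S₁`. -/
theorem tetrahedron_subset_cyganBall :
    convexHull ℝ
      ({(1 - (√2/2 : ℝ) * Complex.I, (√2 : ℝ)),
        (1 - (√2/2 : ℝ) * Complex.I, (1 : ℝ)),
        (1 - (1/2 : ℝ) * Complex.I, (√2 : ℝ)),
        ((√2/2 : ℝ) - (1/2 : ℝ) * Complex.I, (√2 : ℝ))} : Set (ℂ × ℝ)) ⊆
      cyganBall 1 0 1 := by
  refine convexHull_min ?_ (convex_cyganBall 1 0 1)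
  have h2 : √2 ^ 2 = 2 := Real.sq_sqrt zero_le_two
  simp only [Set.insert_subset_iff, Set.singleton_subset_iff, mem_cyganBall_iff zero_le_one,
    cyganGaugeSq_one_zero]
  refine ⟨?_, ?_, ?_, ?_⟩ <;> norm_num <;> nlinarith [Real.sqrt_nonneg 2]

end
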